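/- If K ↪ J is an interval inclusion in an operator category Φ and j ∈ |J| is a point, then the fiber K_j is either a terminal object of Φ or has empty point set |K_j| = ∅. -/

import Mathlib

/-!
Fiber inclusions are pullbacks of points, which are monomorphisms, so every interval inclusion
is a monomorphism. Hence the fiber `P` of `k` over `j` maps monically to `1`: it is subterminal,
and a subterminal object with a point is terminal.
-/

open CategoryTheory Limits

universe v u v' u'

/-- An operator category: an essentially small category with a terminal object,
fibers of morphisms over points, and finite hom-sets. -/
class OperatorCategory (C : Type u) [Category.{v} C] where
  /-- a chosen terminal object -/
  One : C
  isTerminalOne : IsTerminal One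
  fibers : ∀ {J I : C} (f : J ⟶ I) (i : One ⟶ I), HasPullback i f
  finiteHom : ∀ I J : C, Finite (I ⟶ J)
  essSmall : EssentiallySmall.{v} C

variable {C : Type u} [Category.{v} C] [OperatorCategory C]

/-- A fiber inclusion: a morphism that is a pullback of a point `{i} → I`
along some morphism `J → I`. -/
def IsFiberInclusion {K J : C} (k : K ⟶ J) : Prop :=
  ∃ (I : C) (f : J ⟶ I) (i : (OperatorCategory.One : C) ⟶ I),
    IsPullback k (OperatorCategory.isTerminalOne.from K) f i

/-- An interval inclusion: a finite composite of fiber inclusions. -/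
inductive IsIntervalInclusion : ∀ {K J : C}, (K ⟶ J) → Prop
  | id (J : C) : IsIntervalInclusion (𝟙 J)
  | comp {L K J : C} {g : L ⟶ K} {f : K ⟶ J} :
      IsFiberInclusion f → IsIntervalInclusion g → IsIntervalInclusion (g ≫ f)

namespace CategoryTheory

variable {D : Type u'} [Category.{v'} D]

theorem IsSubterminal.of_mono {A B : D} (m : A ⟶ B) [Mono m] (hB : IsSubterminal B) :
    IsSubterminal A :=
  fun _ f g => (cancel_mono m).1 (hB _ _)

def IsSubterminal.isTerminalOfHom {A T : D} (hA : IsSubterminal A) (hT : IsTerminal T)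
    (x : T ⟶ A) : IsTerminal A :=
  IsTerminal.ofUniqueHom (fun Z => hT.from Z ≫ x) (fun _ _ => hA _ _)

theorem IsSubterminal.nonempty_isTerminal_or_isEmpty {A T : D} (hA : IsSubterminal A)
    (hT : IsTerminal T) : Nonempty (IsTerminal A) ∨ IsEmpty (T ⟶ A) :=
  (isEmpty_or_nonempty (T ⟶ A)).symm.imp_left fun ⟨x⟩ => ⟨hA.isTerminalOfHom hT x⟩

end CategoryTheory

theorem IsFiberInclusion.mono {K J : C} {k : K ⟶ J} (h : IsFiberInclusion k) : Mono k := by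
  obtain ⟨_, _, i, hpb⟩ := h
  exact hpb.mono_fst_of_mono (OperatorCategory.isTerminalOne.mono_from i)

theorem IsIntervalInclusion.mono {K J : C} {k : K ⟶ J} (h : IsIntervalInclusion k) :
    Mono k := by
  induction h with
  | id => infer_instance
  | comp hf _ ih =>
    have := hf.mono
    exact mono_comp _ _

/-- the fiber of an interval inclusion `K ↪ J` over a point
`j ∈ |J|` is either terminal or has empty point set. -/
theorem fiber_of_intervalInclusion_terminal_or_empty {K J : C} {k : K ⟶ J}
    (hk : IsIntervalInclusion k) (j : (OperatorCategory.One : C) ⟶ J)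
    {P : C} (p₁ : P ⟶ K) (p₂ : P ⟶ (OperatorCategory.One : C))
    (hP : IsPullback p₁ p₂ k j) :
    Nonempty (IsTerminal P) ∨ IsEmpty ((OperatorCategory.One : C) ⟶ P) := by
  have : Mono k := hk.mono
  have : Mono p₂ := hP.mono_snd_of_mono
  have hP_subterminal : IsSubterminal P :=
    (isSubterminal_of_isTerminal OperatorCategory.isTerminalOne).of_mono p₂
  exact hP_subterminal.nonempty_isTerminal_or_isEmpty OperatorCategory.isTerminalOne
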